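/- For any g in the symplectic group SP(2n), any subsets A, D of {1,...,n} with #A + #D + 2 = k ≤ n, the pairing ⟨e*_{A,D̄} ∧ Ω, g·(e_1∧...∧e_k)⟩ equals 0, where e*_{A,D̄} = e*_{p_1}∧...∧e*_{p_s}∧e*_{q̄_t}∧...∧e*_{q̄_1} for A = {p_1<...<p_s}, D = {q_1<...<q_t}. (These are the internal Plücker relations of sp(2n).) -/

import Mathlib

/-!
Expanding `Ω`, the pairing is `∑ᵢ det(p₁, …, q̄₁, i, ī)` (rows of `g`, columns `1, …, k`).
With the first `k - 2` rows frozen, the determinant is an alternating bilinear form `β` in the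
last two rows, so the sum is `∑_{c,c'} S c c' • β(e_c, e_{c'})` with `S c c' = ∑ᵢ g_{ic} g_{īc'}`.
The symplectic condition `gᵀ J g = J` read at two unbarred columns `c, c' ≤ k ≤ n`, where `J`
vanishes, says exactly that `S` is symmetric, and a symmetric matrix pairs to zero against the
alternating `β`.
-/

noncomputable section

/-- The matrix of the standard symplectic form `Ω = Σ_i e_i^* ∧ e_{ī}^*` on `ℂ^{2n}`,
the basis being ordered `e_1, …, e_n, e_{n̄}, …, e_{1̄}`. -/
def Jmat (n : ℕ) : Matrix (Fin (2 * n)) (Fin (2 * n)) ℂ :=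
  Matrix.of fun a b =>
    if (a : ℕ) < n ∧ (b : ℕ) = 2 * n - 1 - (a : ℕ) then 1
    else if (b : ℕ) < n ∧ (a : ℕ) = 2 * n - 1 - (b : ℕ) then -1 else 0

/-- The symplectic group: matrices preserving `Ω`. -/
def IsSymplectic (n : ℕ) (g : Matrix (Fin (2 * n)) (Fin (2 * n)) ℂ) : Prop :=
  Matrix.transpose g * Jmat n * g = Jmat n

/-- Inclusion of an unbarred index `i ∈ {1,…,n}` among the `2n` basis indices. -/
def emb (n : ℕ) (i : Fin n) : Fin (2 * n) := ⟨(i : ℕ), by have := i.isLt; omega⟩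

/-- The barred index `ī` : position `2n - 1 - i` (0-based). -/
def barF (n : ℕ) (i : Fin n) : Fin (2 * n) := ⟨2 * n - 1 - (i : ℕ), by have := i.isLt; omega⟩

open Function

section AlternatingBilinear

variable {R ι κ ρ N : Type*} [CommRing R] [AddCommGroup N] [Module R N]

theorem LinearMap.IsAlt.sum_apply_eq_zero [Fintype ι] [Fintype κ]
    {β : (ι → R) →ₗ[R] (ι → R) →ₗ[R] N} (hβ : β.IsAlt)
    (u v : κ → ι → R) (hsymm : ∀ c c', ∑ i, u i c * v i c' = ∑ i, u i c' * v i c) :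
    ∑ i, β (u i) (v i) = 0 := by
  set e := Pi.basisFun R ι
  set S : ι → ι → R := fun c c' => ∑ i, u i c * v i c'
  have expand : ∀ x y, β x y = ∑ c, ∑ c', (x c * y c') • β (e c) (e c') := by
    intro x y
    conv_lhs => rw [← e.sum_repr x, ← e.sum_repr y]
    simp only [e, Pi.basisFun_repr, map_sum, map_smul, LinearMap.sum_apply, LinearMap.smul_apply,
      Finset.smul_sum, mul_smul]
    rw [Finset.sum_comm]
    exact Finset.sum_congr rfl fun _ _ => Finset.sum_congr rfl fun _ _ => smul_comm _ _ _
  calc ∑ i, β (u i) (v i) = ∑ p : ι × ι, S p.1 p.2 • β (e p.1) (e p.2) := by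
        simp only [expand (u _) (v _), S, Finset.sum_smul, Fintype.sum_prod_type]
        rw [Finset.sum_comm]
        refine Finset.sum_congr rfl fun c _ => ?_
        rw [Finset.sum_comm]
    _ = 0 := by
      -- pairing `(c, c')` with `(c', c)` instead of halving: no assumption on the characteristic
      refine Finset.sum_involution (fun p _ => p.swap) (fun p _ => ?_) (fun p _ => ?_)
        (by simp) (by simp)
      · rw [Prod.fst_swap, Prod.snd_swap, ← hβ.neg (e p.1), show S p.2 p.1 = S p.1 p.2 from
          (hsymm _ _).symm, smul_neg, add_neg_cancel]
      · obtain ⟨c, c'⟩ := p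
        rintro hne heq
        obtain rfl : c' = c := congrArg Prod.fst heq
        exact hne (by rw [hβ, smul_zero])

variable [DecidableEq ρ]

def AlternatingMap.toLinearMap₂ (f : (ι → R) [⋀^ρ]→ₗ[R] N) (w : ρ → ι → R) {r₁ r₂ : ρ}
    (h : r₁ ≠ r₂) : (ι → R) →ₗ[R] (ι → R) →ₗ[R] N :=
  LinearMap.mk₂ R (fun x y => f (update (update w r₁ x) r₂ y))
    (fun x x' y => by simp only [update_comm h _ y w, f.map_update_add])
    (fun c x y => by simp only [update_comm h _ y w, f.map_update_smul])
    (fun x y y' => f.map_update_add _ r₂ y y')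
    (fun c x y => f.map_update_smul _ r₂ c y)

theorem AlternatingMap.isAlt_toLinearMap₂ (f : (ι → R) [⋀^ρ]→ₗ[R] N) (w : ρ → ι → R)
    {r₁ r₂ : ρ} (h : r₁ ≠ r₂) : (f.toLinearMap₂ w h).IsAlt := fun x =>
  f.map_eq_zero_of_eq _ (by rw [update_self, update_of_ne h, update_self]) h

theorem AlternatingMap.sum_map_update_update_eq_zero [Fintype ι] [Fintype κ]
    (f : (ι → R) [⋀^ρ]→ₗ[R] N) (w : ρ → ι → R) {r₁ r₂ : ρ} (h : r₁ ≠ r₂) (u v : κ → ι → R)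
    (hsymm : ∀ c c', ∑ i, u i c * v i c' = ∑ i, u i c' * v i c) :
    ∑ i, f (update (update w r₁ (u i)) r₂ (v i)) = 0 :=
  (f.isAlt_toLinearMap₂ w h).sum_apply_eq_zero u v hsymm

end AlternatingBilinear

theorem List.getD_append_pair_eq_update {α : Type*} (l : List α) (a b d : α) {k : ℕ}
    (hk : l.length + 2 = k) :
    (fun r : Fin k => (l ++ [a, b]).getD r d) =
      update (update (fun r : Fin k => l.getD r d) ⟨l.length, by omega⟩ a)
        ⟨l.length + 1, by omega⟩ b := by
  funext ⟨r, hr⟩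
  simp only [update_apply, Fin.mk.injEq]
  rcases lt_trichotomy r l.length with hlt | rfl | hgt
  · rw [List.getD_append _ _ _ _ hlt, if_neg (by omega), if_neg (by omega)]
  · simp
  · obtain rfl : r = l.length + 1 := by omega
    simp

theorem bijective_sum_elim_emb_barF (n : ℕ) : Bijective (Sum.elim (emb n) (barF n)) := by
  refine (Fintype.bijective_iff_injective_and_card _).2 ⟨?_, by simp [two_mul]⟩
  rintro (i | i) (j | j) h <;>
    simp only [Sum.elim_inl, Sum.elim_inr, emb, barF, Fin.ext_iff, Sum.inl.injEq, Sum.inr.injEq,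
      reduceCtorEq] at h ⊢ <;> omega

theorem sum_eq_sum_emb_add_sum_barF (n : ℕ) {M : Type*} [AddCommMonoid M]
    (f : Fin (2 * n) → M) :
    ∑ p, f p = ∑ i, f (emb n i) + ∑ i, f (barF n i) := by
  rw [← Fintype.sum_bijective _ (bijective_sum_elim_emb_barF n) (f ∘ Sum.elim (emb n) (barF n)) f
    fun _ => rfl, Fintype.sum_sum_type]
  rfl

theorem Jmat_emb_apply (n : ℕ) (i : Fin n) (q : Fin (2 * n)) :
    Jmat n (emb n i) q = if q = barF n i then 1 else 0 := by
  have := i.isLt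
  simp only [Jmat, emb, barF, Matrix.of_apply, Fin.ext_iff]
  split_ifs <;> first | rfl | omega

theorem Jmat_barF_apply (n : ℕ) (i : Fin n) (q : Fin (2 * n)) :
    Jmat n (barF n i) q = if q = emb n i then -1 else 0 := by
  have := i.isLt
  simp only [Jmat, emb, barF, Matrix.of_apply, Fin.ext_iff]
  split_ifs <;> first | rfl | omega

theorem transpose_mul_Jmat_mul_apply (n : ℕ) (g : Matrix (Fin (2 * n)) (Fin (2 * n)) ℂ)
    (a b : Fin (2 * n)) :
    (g.transpose * Jmat n * g) a b =
      ∑ i, (g (emb n i) a * g (barF n i) b - g (barF n i) a * g (emb n i) b) := by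
  rw [Matrix.mul_assoc, Matrix.mul_apply, sum_eq_sum_emb_add_sum_barF n, Finset.sum_sub_distrib]
  simp [Matrix.mul_apply, Jmat_emb_apply, Jmat_barF_apply, sub_eq_add_neg]

theorem Jmat_emb_emb (n : ℕ) (i j : Fin n) : Jmat n (emb n i) (emb n j) = 0 := by
  rw [Jmat_emb_apply, if_neg]
  simp only [emb, barF, Fin.ext_iff]
  omega

theorem IsSymplectic.sum_emb_mul_barF_comm {n : ℕ} {g : Matrix (Fin (2 * n)) (Fin (2 * n)) ℂ}
    (hg : IsSymplectic n g) (a b : Fin n) :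
    ∑ i, g (emb n i) (emb n a) * g (barF n i) (emb n b) =
      ∑ i, g (emb n i) (emb n b) * g (barF n i) (emb n a) := by
  have h := transpose_mul_Jmat_mul_apply n g (emb n a) (emb n b)
  rw [hg, Jmat_emb_emb, Finset.sum_sub_distrib, eq_comm, sub_eq_zero] at h
  simpa only [mul_comm] using h

/-- **internal Plücker relations of `sp(2n)`.**
For `g ∈ SP(2n)`, `A, D ⊆ {1,…,n}` with `#A + #D + 2 = k ≤ n`,
`⟨e*_{A,D̄} ∧ Ω, g e_1 ∧ ⋯ ∧ g e_k⟩ = Σ_{i=1}^n ⟨e*_{A,D̄} ∧ e_i^* ∧ e_{ī}^*, g e_1 ∧ ⋯ ∧ g e_k⟩ = 0`,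
each summand being the determinant of the submatrix of `g` on the rows listed as
`A` increasing, then `D̄` (i.e. `q̄_t, …, q̄_1`), then `i, ī`, and on the columns `1, …, k`. -/
theorem internal_pluecker (n k : ℕ) (g : Matrix (Fin (2 * n)) (Fin (2 * n)) ℂ)
    (hg : IsSymplectic n g) (A D : Finset (Fin n))
    (hcard : A.card + D.card + 2 = k) (hk : k ≤ n) :
    ∑ i : Fin n,
      Matrix.det (Matrix.of fun r c : Fin k =>
        g (((A.sort (· ≤ ·)).map (emb n) ++ ((D.sort (· ≤ ·)).reverse.map (barF n)) ++
              [emb n i, barF n i]).getD (r : ℕ) (⟨0, by omega⟩ : Fin (2 * n)))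
          (⟨(c : ℕ), by have := c.isLt; omega⟩ : Fin (2 * n))) = 0 := by
  set base := (A.sort (· ≤ ·)).map (emb n) ++ (D.sort (· ≤ ·)).reverse.map (barF n)
  have hlen : base.length + 2 = k := by 
    simp only [base, List.length_append, List.length_map, List.length_reverse, Finset.length_sort]
    omega
  let rows : Fin (2 * n) → Fin k → ℂ := fun p c => g p ⟨c, by omega⟩
  have hsymm : ∀ c c' : Fin k, ∑ i, rows (emb n i) c * rows (barF n i) c' =
      ∑ i, rows (emb n i) c' * rows (barF n i) c := fun c c' =>
    hg.sum_emb_mul_barF_comm ⟨c, by omega⟩ ⟨c', by omega⟩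
  refine (Finset.sum_congr rfl fun i _ => ?_).trans
    (Matrix.detRowAlternating.sum_map_update_update_eq_zero
      (rows ∘ fun r : Fin k => base.getD r ⟨0, by omega⟩) (r₁ := ⟨base.length, by omega⟩)
      (r₂ := ⟨base.length + 1, by omega⟩) (by simp) _ _ hsymm)
  change Matrix.detRowAlternating
    (rows ∘ fun r : Fin k => (base ++ [emb n i, barF n i]).getD r ⟨0, by omega⟩) = _
  rw [List.getD_append_pair_eq_update _ _ _ _ hlen, comp_update, comp_update]

end
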